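/- The intersection F_9 ∩ C is nonempty; that is, there exists a point of the ternary Cantor set whose continued fraction partial quotients are all at most 9. -/

import Mathlib

/-- The Gauss map `x ↦ {1/x}`. -/
noncomputable def gaussMap (x : ℝ) : ℝ := Int.fract (1 / x)

/-- `Fset n` is the set of irrational numbers in `(0,1)` all of whose continued
fraction partial quotients are at most `n`. -/
noncomputable def Fset (n : ℕ) : Set ℝ :=
  {x | Irrational x ∧ x ∈ Set.Ioo (0 : ℝ) 1 ∧
    ∀ k : ℕ, ⌊1 / (gaussMap^[k] x)⌋ ≤ (n : ℤ)}

/-- The ternary Cantor set `{∑ 2bₙ 3^{-(n+1)} : b : ℕ → {0,1}}`. -/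
noncomputable def ternaryCantor : Set ℝ :=
  {x | ∃ b : ℕ → Bool, x = ∑' n : ℕ, (if b n then (2 : ℝ) else 0) / 3 ^ (n + 1)}

/-!
The witness is `x = 0.0 22 0000 22222222 0…₃`, whose ternary digits are `2` exactly on the odd
blocks `[2^j - 1, 2^(j+1) - 1)`. Truncating its expansion after `2^(i+4) - 1` digits, and rounding
up when the next block is a block of zeros, gives rationals `bᵢ/dᵢ` with `dᵢ = 3^(2^(i+3) - 1)`,
`|x - bᵢ/dᵢ| ≤ 1/(3dᵢ²)` and `bᵢ₊₁/dᵢ₊₁ = bᵢ/dᵢ ± 1/(3dᵢ²)`. By the folding lemma for continued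
fractions, if `bᵢ/dᵢ = [0; 3, uᵢ, 3]` then `bᵢ₊₁/dᵢ₊₁` is `[0; 3, uᵢ, 2, 1, 2, 3, ũᵢ, 3]` or
`[0; 3, uᵢ, 3, 2, 1, 2, ũᵢ, 3]`, with `ũᵢ` the reversal of `uᵢ`. An approximation within
`1/(3dᵢ²)` of `[0; 3, uᵢ, 3]` forces `x` into the cylinder of `[3, uᵢ]`. As these words grow, every
partial quotient of `x` is at most `3`, and its Gauss orbit never reaches `0`, so `x` is irrational.
-/

open Matrix Function Real

def cfMatrix (t : ℤ) : Matrix (Fin 2) (Fin 2) ℤ := !![0, 1; 1, t]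

def continuantMatrix (w : List ℤ) : Matrix (Fin 2) (Fin 2) ℤ := (w.map cfMatrix).prod

@[simp] lemma continuantMatrix_nil : continuantMatrix [] = 1 := rfl

@[simp] lemma continuantMatrix_cons (t : ℤ) (w : List ℤ) :
    continuantMatrix (t :: w) = cfMatrix t * continuantMatrix w := rfl

lemma continuantMatrix_append (u v : List ℤ) :
    continuantMatrix (u ++ v) = continuantMatrix u * continuantMatrix v := by
  simp [continuantMatrix]

lemma continuantMatrix_reverse (w : List ℤ) :
    continuantMatrix w.reverse = (continuantMatrix w)ᵀ := by
  have hsymm : transpose ∘ cfMatrix = cfMatrix := by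
    funext t; ext i j; fin_cases i <;> fin_cases j <;> rfl
  rw [continuantMatrix, continuantMatrix, transpose_list_prod, List.map_map, hsymm,
    List.map_reverse]

lemma continuantMatrix_eq_append_mul (w : List ℤ) (t : ℤ) :
    continuantMatrix w = continuantMatrix (w ++ [t]) * !![-t, 1; 1, 0] := by
  rw [continuantMatrix_append, Matrix.mul_assoc]
  have : continuantMatrix [t] * !![-t, 1; 1, 0] = 1 := by
    simp [cfMatrix, Matrix.one_fin_two]
  rw [this, Matrix.mul_one]

lemma continuantMatrix_entries_nonneg {w : List ℤ} (hw : ∀ t ∈ w, 1 ≤ t) :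
    0 ≤ continuantMatrix w 0 0 ∧ 0 ≤ continuantMatrix w 0 1 ∧
      0 ≤ continuantMatrix w 1 0 ∧ 1 ≤ continuantMatrix w 1 1 := by
  induction w with
  | nil => simp
  | cons t w ih =>
    obtain ⟨ht, hw⟩ := List.forall_mem_cons.mp hw
    obtain ⟨h00, h01, h10, h11⟩ := ih hw
    simp only [continuantMatrix_cons, cfMatrix, mul_apply, Fin.sum_univ_two, of_apply, cons_val',
      cons_val_zero, cons_val_fin_one, cons_val_one, zero_mul, one_mul, zero_add]
    exact ⟨h10, h11.trans' zero_le_one, by nlinarith, by nlinarith⟩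

noncomputable def mobius (M : Matrix (Fin 2) (Fin 2) ℤ) (y : ℝ) : ℝ :=
  (M 0 0 * y + M 0 1) / (M 1 0 * y + M 1 1)

lemma mobius_cfMatrix_mul (t : ℤ) (M : Matrix (Fin 2) (Fin 2) ℤ) {y : ℝ}
    (hy : 0 < (M 1 0 * y + M 1 1 : ℝ)) :
    mobius (cfMatrix t * M) y = 1 / (t + mobius M y) := by
  simp only [mobius, cfMatrix, mul_apply, of_apply, cons_val', cons_val_fin_one, cons_val_zero,
    Fin.sum_univ_two, zero_mul, cons_val_one, one_mul, zero_add, Int.cast_add, Int.cast_mul]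
  field_simp
  ring

/-- The numbers in `(0, 1)` whose continued fraction expansion begins with `w`. -/
def cylinder : List ℤ → Set ℝ
  | [] => Set.Ioo 0 1
  | t :: w => (fun y => 1 / (t + y)) '' cylinder w

lemma cylinder_subset_Ioo {w : List ℤ} (hw : ∀ t ∈ w, 1 ≤ t) :
    cylinder w ⊆ Set.Ioo 0 1 := by
  induction w with
  | nil => exact subset_rfl
  | cons t w ih =>
    rintro _ ⟨y, hy, rfl⟩
    obtain ⟨ht, hw⟩ := List.forall_mem_cons.mp hw
    have ht : (1 : ℝ) ≤ t := mod_cast ht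
    have hy0 := (ih hw hy).1
    constructor
    · positivity
    · rw [div_lt_one (by linarith)]; linarith

lemma gaussMap_one_div_add (t : ℤ) {y : ℝ} (hy : y ∈ Set.Ico 0 1) :
    gaussMap (1 / (t + y)) = y := by
  rw [gaussMap, one_div_one_div, Int.fract_intCast_add, Int.fract_eq_self.mpr hy]

lemma floor_one_div_one_div_add (t : ℤ) {y : ℝ} (hy : y ∈ Set.Ico 0 1) :
    ⌊1 / (1 / (t + y))⌋ = t := by
  rw [one_div_one_div, Int.floor_intCast_add, Int.floor_eq_zero_iff.mpr hy, add_zero]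

lemma iterate_gaussMap_mem_cylinder_drop {w : List ℤ} (hw : ∀ t ∈ w, 1 ≤ t) {x : ℝ}
    (hx : x ∈ cylinder w) {k : ℕ} (hk : k ≤ w.length) :
    gaussMap^[k] x ∈ cylinder (w.drop k) := by
  induction w generalizing x k with
  | nil => simp_all
  | cons t w ih =>
    cases k with
    | zero => exact hx
    | succ k =>
      obtain ⟨y, hy, rfl⟩ := hx
      obtain ⟨-, hw⟩ := List.forall_mem_cons.mp hw
      rw [iterate_succ_apply, gaussMap_one_div_add t (Set.Ioo_subset_Ico_self
        (cylinder_subset_Ioo hw hy))]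
      exact ih hw hy (Nat.le_of_succ_le_succ hk)

lemma floor_one_div_iterate_gaussMap {w : List ℤ} (hw : ∀ t ∈ w, 1 ≤ t) {x : ℝ}
    (hx : x ∈ cylinder w) {k : ℕ} (hk : k < w.length) :
    ⌊1 / gaussMap^[k] x⌋ = w[k] := by
  have hmem := iterate_gaussMap_mem_cylinder_drop hw hx hk.le
  rw [List.drop_eq_getElem_cons hk] at hmem
  obtain ⟨y, hy, hxy⟩ := hmem
  have hw' : ∀ s ∈ w.drop (k + 1), 1 ≤ s := fun s hs => hw s (List.mem_of_mem_drop hs)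
  rw [← hxy, floor_one_div_one_div_add _ (Set.Ioo_subset_Ico_self (cylinder_subset_Ioo hw' hy))]

lemma between_one_div_add {p q t x : ℝ} (hp : 0 ≤ p) (hq : 0 ≤ q) (ht : 0 < t)
    (h : (1 / (t + p) - x) * (1 / (t + q) - x) < 0) :
    0 < x ∧ (p - (1 / x - t)) * (q - (1 / x - t)) < 0 := by
  have hx : 0 < x := by
    by_contra! hx
    have hp' : 0 < 1 / (t + p) - x := by linarith [show 0 < 1 / (t + p) by positivity]
    have hq' : 0 < 1 / (t + q) - x := by linarith [show 0 < 1 / (t + q) by positivity]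
    exact h.not_gt (mul_pos hp' hq')
  refine ⟨hx, ?_⟩
  have key : (p - (1 / x - t)) * (q - (1 / x - t)) =
      (1 / (t + p) - x) * (1 / (t + q) - x) * ((t + p) * (t + q) / x ^ 2) := by
    field_simp
    ring
  rw [key]
  exact mul_neg_of_neg_of_pos h (by positivity)

lemma mem_cylinder_of_between {w : List ℤ} (hw : ∀ t ∈ w, 1 ≤ t) {x : ℝ}
    (h : (mobius (continuantMatrix w) 0 - x) * (mobius (continuantMatrix w) 1 - x) < 0) :
    x ∈ cylinder w := by
  induction w generalizing x with
  | nil =>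
    have h' : (0 - x) * (1 - x) < 0 := by simpa [mobius] using h
    constructor <;> nlinarith
  | cons t w ih =>
    obtain ⟨ht, hw⟩ := List.forall_mem_cons.mp hw
    obtain ⟨h00, h01, h10, h11⟩ := continuantMatrix_entries_nonneg hw
    set M := continuantMatrix w
    have hM {y : ℝ} (hy : 0 ≤ y) :
        0 ≤ (M 0 0 * y + M 0 1 : ℝ) ∧ 0 < (M 1 0 * y + M 1 1 : ℝ) :=
      ⟨add_nonneg (mul_nonneg (mod_cast h00) hy) (mod_cast h01),
        add_pos_of_nonneg_of_pos (mul_nonneg (mod_cast h10) hy) (mod_cast h11)⟩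
    have hM0 := hM le_rfl
    have hM1 := hM zero_le_one
    rw [continuantMatrix_cons, mobius_cfMatrix_mul t M hM0.2, mobius_cfMatrix_mul t M hM1.2] at h
    obtain ⟨hx, hbetween⟩ := between_one_div_add (div_nonneg hM0.1 hM0.2.le)
      (div_nonneg hM1.1 hM1.2.le) (mod_cast ht) h
    exact ⟨1 / x - t, ih hw hbetween, by simp only [add_sub_cancel, one_div_one_div]⟩

lemma exists_iterate_gaussMap_ratCast_eq_zero (q : ℚ) : ∃ k, gaussMap^[k] (q : ℝ) = 0 := by
  have gaussMap_ratCast (r : ℚ) : gaussMap r = (Int.fract r⁻¹ : ℚ) := by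
    rw [gaussMap, one_div, ← Rat.cast_inv, Rat.cast_fract]
  suffices h : ∀ n : ℕ, ∀ r : ℚ, 0 ≤ r → r.num.natAbs ≤ n →
      ∃ k, gaussMap^[k] (r : ℝ) = 0 by
    obtain ⟨k, hk⟩ := h _ _ (Int.fract_nonneg q⁻¹) le_rfl
    exact ⟨k + 1, by rwa [iterate_succ_apply, gaussMap_ratCast]⟩
  intro n
  induction n with
  | zero => intro r _ hr; exact ⟨0, by simpa using hr⟩
  | succ n ih =>
    intro r hr0 hr
    rcases hr0.eq_or_lt with rfl | hr0
    · exact ⟨0, by simp⟩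
    have hlt := Rat.fract_inv_num_lt_num_of_pos hr0
    have hnum := Rat.num_nonneg.mpr (Int.fract_nonneg r⁻¹)
    obtain ⟨k, hk⟩ := ih (Int.fract r⁻¹) (Int.fract_nonneg _) (by omega)
    exact ⟨k + 1, by rwa [iterate_succ_apply, gaussMap_ratCast]⟩

lemma irrational_of_iterate_gaussMap_ne_zero {x : ℝ} (hx : ∀ k, gaussMap^[k] x ≠ 0) :
    Irrational x := by
  rintro ⟨q, rfl⟩
  obtain ⟨k, hk⟩ := exists_iterate_gaussMap_ratCast_eq_zero q
  exact hx k hk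

lemma mem_Fset_of_forall_mem_cylinder (n : ℕ) (ws : ℕ → List ℤ)
    (hbound : ∀ i, ∀ t ∈ ws i, 1 ≤ t ∧ t ≤ n)
    (hlength : ∀ k, ∃ i, k < (ws i).length)
    {x : ℝ} (hx : ∀ i, x ∈ cylinder (ws i)) : x ∈ Fset n := by
  have horbit : ∀ k, gaussMap^[k] x ∈ Set.Ioo 0 1 ∧ ⌊1 / gaussMap^[k] x⌋ ≤ n := by
    intro k
    obtain ⟨i, hi⟩ := hlength k
    have hw : ∀ t ∈ ws i, 1 ≤ t := fun t ht => (hbound i t ht).1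
    refine ⟨cylinder_subset_Ioo (fun t ht => hw t (List.mem_of_mem_drop ht))
      (iterate_gaussMap_mem_cylinder_drop hw (hx i) hi.le), ?_⟩
    rw [floor_one_div_iterate_gaussMap hw (hx i) hi]
    exact (hbound i _ (List.getElem_mem hi)).2
  exact ⟨irrational_of_iterate_gaussMap_ne_zero fun k => (horbit k).1.1.ne',
    (horbit 0).1, fun k => (horbit k).2⟩

/-- `A / C` and `(B - 2A) / (D - 2C)` are the endpoints of the cylinder of `w` when
`!![A, B; C, D]` is the continuant matrix of `w ++ [3]`. -/
lemma between_of_abs_sub_le {A B C D x : ℝ} (hdet : A * D - B * C = 1) (hC : 1 ≤ C)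
    (hCD : 2 * C < D) (habs : |x - B / D| ≤ (3 * D ^ 2)⁻¹) :
    (A / C - x) * ((B - 2 * A) / (D - 2 * C) - x) < 0 := by
  have hD : 0 < D := by linarith
  have hDC : 0 < D - 2 * C := by linarith
  have hxD : |x * D - B| ≤ (3 * D)⁻¹ := by
    have : x * D - B = (x - B / D) * D := by field_simp
    rw [this, abs_mul, abs_of_pos hD]
    calc |x - B / D| * D ≤ (3 * D ^ 2)⁻¹ * D := by gcongr
      _ = (3 * D)⁻¹ := by field_simp
  obtain ⟨hlo, hhi⟩ := abs_le.mp hxD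
  have hinv : (3 * D)⁻¹ * D = 1 / 3 := by field_simp
  have hleft : 0 < A - x * C := by
    have : D * (A - x * C) = 1 - C * (x * D - B) := by linear_combination hdet
    nlinarith
  have hright : (B - 2 * A) - x * (D - 2 * C) < 0 := by
    have : D * ((B - 2 * A) - x * (D - 2 * C)) = -2 - (D - 2 * C) * (x * D - B) := by
      linear_combination -2 * hdet
    nlinarith
  have e1 : A / C - x = (A - x * C) / C := by field_simp
  have e2 : (B - 2 * A) / (D - 2 * C) - x = ((B - 2 * A) - x * (D - 2 * C)) / (D - 2 * C) := by
    field_simp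
  rw [e1, e2]
  exact mul_neg_of_pos_of_neg (by positivity) (div_neg_of_neg_of_pos hright hDC)

lemma ofDigits_mem_ternaryCantor {a : ℕ → Fin 3} (ha : ∀ n, a n ≠ 1) :
    ofDigits a ∈ ternaryCantor := by
  refine ⟨fun n => a n = 2, tsum_congr fun n => ?_⟩
  rw [ofDigitsTerm, div_eq_mul_inv]
  have := ha n
  rcases (by omega : a n = 0 ∨ a n = 2) with h | h <;> simp [h]

lemma pow_two_pow_succ_sub_one {M : Type*} [Monoid M] (a : M) (j : ℕ) :
    a ^ (2 ^ (j + 1) - 1) = (a ^ (2 ^ j - 1)) ^ 2 * a := by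
  have := Nat.one_le_two_pow (n := j)
  rw [← pow_mul, ← pow_succ]
  congr 1
  rw [pow_succ]
  omega

def innerWord : ℕ → List ℤ
  | 0 => [2, 1, 2, 2, 1, 1, 1, 2]
  | i + 1 => innerWord i ++ (if Even i then [2, 1, 2, 3] else [3, 2, 1, 2]) ++ (innerWord i).reverse

lemma mem_innerWord {i : ℕ} {t : ℤ} (ht : t ∈ innerWord i) : 1 ≤ t ∧ t ≤ 3 := by
  induction i with
  | zero =>
    simp only [innerWord, List.mem_cons, List.not_mem_nil, or_false] at ht
    omega
  | succ i ih =>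
    simp only [innerWord, List.mem_append, List.mem_reverse] at ht
    split_ifs at ht <;> simp only [List.mem_cons, List.not_mem_nil, or_false] at ht <;> grind

lemma forall_mem_cons_innerWord (i : ℕ) : ∀ t ∈ 3 :: innerWord i, 1 ≤ t ∧ t ≤ 3 :=
  List.forall_mem_cons.mpr ⟨by norm_num, fun _ => mem_innerWord⟩

lemma le_length_innerWord (i : ℕ) : i ≤ (innerWord i).length := by
  induction i with
  | zero => simp
  | succ i ih =>
    simp only [innerWord, List.length_append, List.length_reverse]
    split_ifs <;> simp only [List.length_cons, List.length_nil] <;> omega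

def foldStep (ε b d : ℤ) : Matrix (Fin 2) (Fin 2) ℤ :=
  !![3 * b ^ 2, 3 * b * d - ε; 3 * b * d + ε, 3 * d ^ 2]

lemma transpose_foldStep (ε b d : ℤ) : (foldStep ε b d)ᵀ = foldStep (-ε) b d := by
  ext i j
  fin_cases i <;> fin_cases j <;> simp [foldStep, sub_eq_add_neg]

lemma det_foldStep (ε b d : ℤ) : (foldStep ε b d).det = ε ^ 2 := by
  rw [foldStep, det_fin_two_of]
  ring

/-- `Q * !![-3, 1; 1, 0]` is the continuant matrix of `3 :: u` when `Q` is that of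
`3 :: u ++ [3]`, and `!![1, 3; 3, 8]` is that of `[2, 1, 2]`. -/
lemma folding_identity {Q : Matrix (Fin 2) (Fin 2) ℤ} (hQ : Q.det = 1) :
    Q * !![-3, 1; 1, 0] * !![1, 3; 3, 8] * Qᵀ = foldStep 1 (Q 0 1) (Q 1 1) := by
  rw [det_fin_two] at hQ
  ext i j
  fin_cases i <;> fin_cases j <;>
    simp only [foldStep, Fin.isValue, Fin.zero_eta, Fin.mk_one, mul_apply, of_apply, cons_val',
      cons_val_fin_one, Fin.sum_univ_two, cons_val_zero, cons_val_one, mul_neg, mul_one, mul_zero,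
      add_zero, transpose_apply, neg_add_cancel_comm]
  · ring
  · linear_combination -hQ
  · linear_combination hQ
  · ring

def foldedMatrix : ℕ → Matrix (Fin 2) (Fin 2) ℤ
  | 0 => !![192, 649; 647, 2187] -- continuant matrix of `[3, 2, 1, 2, 2, 1, 1, 1, 2, 3]`
  | i + 1 => foldStep ((-1) ^ i) (foldedMatrix i 0 1) (foldedMatrix i 1 1)

lemma foldedMatrix_succ_zero_one (i : ℕ) :
    foldedMatrix (i + 1) 0 1 = 3 * foldedMatrix i 0 1 * foldedMatrix i 1 1 - (-1) ^ i :=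
  rfl

lemma foldedMatrix_succ_one_one (i : ℕ) :
    foldedMatrix (i + 1) 1 1 = 3 * foldedMatrix i 1 1 ^ 2 :=
  rfl

lemma det_foldedMatrix (i : ℕ) : (foldedMatrix i).det = 1 := by
  cases i with
  | zero => simp [foldedMatrix, det_fin_two]
  | succ i =>
    rw [foldedMatrix, det_foldStep, ← pow_mul]
    exact Even.neg_one_pow ⟨i, by ring⟩

lemma foldedMatrix_bounds (i : ℕ) :
    1 ≤ foldedMatrix i 0 1 ∧ 3 * foldedMatrix i 0 1 < foldedMatrix i 1 1 ∧
      1 ≤ foldedMatrix i 1 0 ∧ 2 * foldedMatrix i 1 0 < foldedMatrix i 1 1 := by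
  induction i with
  | zero => simp [foldedMatrix]
  | succ i ih =>
    obtain ⟨hb, hbd, -, -⟩ := ih
    simp only [foldedMatrix, foldStep, of_apply, cons_val', cons_val_zero, cons_val_one,
      cons_val_fin_one]
    rcases neg_one_pow_eq_or ℤ i with h | h <;> rw [h] <;>
      exact ⟨by nlinarith, by nlinarith, by nlinarith, by nlinarith⟩

lemma foldedMatrix_one_one (i : ℕ) : foldedMatrix i 1 1 = 3 ^ (2 ^ (i + 3) - 1) := by
  induction i with
  | zero => simp [foldedMatrix]
  | succ i ih =>
    rw [foldedMatrix_succ_one_one, ih, mul_comm]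
    exact (pow_two_pow_succ_sub_one 3 (i + 3)).symm

lemma continuantMatrix_foldedWord (i : ℕ) :
    continuantMatrix (3 :: innerWord i ++ [3]) = foldedMatrix i := by
  induction i with
  | zero => decide
  | succ i ih =>
    set u := innerWord i
    have hfold : continuantMatrix (3 :: (u ++ [2, 1, 2, 3] ++ u.reverse) ++ [3]) =
        foldStep 1 (foldedMatrix i 0 1) (foldedMatrix i 1 1) := by
      have hw : 3 :: (u ++ [2, 1, 2, 3] ++ u.reverse) ++ [3] =
          (3 :: u) ++ [2, 1, 2] ++ (3 :: u ++ [3]).reverse := by simp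
      have hB : continuantMatrix [2, 1, 2] = !![1, 3; 3, 8] := by decide
      rw [hw, continuantMatrix_append, continuantMatrix_append, continuantMatrix_reverse,
        continuantMatrix_eq_append_mul (3 :: u) 3, hB, ih, folding_identity (det_foldedMatrix i)]
    rcases Nat.even_or_odd i with hi | hi
    · simpa [innerWord, foldedMatrix, hi, hi.neg_one_pow] using hfold
    · have hw : 3 :: innerWord (i + 1) ++ [3] =
          (3 :: (u ++ [2, 1, 2, 3] ++ u.reverse) ++ [3]).reverse := by
        simp [innerWord, Nat.not_even_iff_odd.mpr hi, u]
      rw [hw, continuantMatrix_reverse, hfold, transpose_foldStep, foldedMatrix, hi.neg_one_pow]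

def blockDigits (n : ℕ) : Fin 3 := if Odd (Nat.log 2 (n + 1)) then 2 else 0

lemma sum_ofDigitsTerm_blockDigits_Ico (j : ℕ) :
    ∑ n ∈ Finset.Ico (2 ^ j - 1) (2 ^ (j + 1) - 1), ofDigitsTerm blockDigits n =
      if Odd j then
        ((3 : ℝ) ^ (2 ^ j - 1))⁻¹ - ((3 : ℝ) ^ (2 ^ (j + 1) - 1))⁻¹ else 0 := by
  have hlog : ∀ n ∈ Finset.Ico (2 ^ j - 1) (2 ^ (j + 1) - 1), Nat.log 2 (n + 1) = j := by
    intro n hn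
    rw [Finset.mem_Ico] at hn
    have := Nat.one_le_two_pow (n := j)
    exact Nat.log_eq_of_pow_le_of_lt_pow (by omega) (by omega)
  split_ifs with hj
  · have hterm : ∀ n ∈ Finset.Ico (2 ^ j - 1) (2 ^ (j + 1) - 1), ofDigitsTerm blockDigits n =
        -((3 : ℝ) ^ (n + 1))⁻¹ - -((3 : ℝ) ^ n)⁻¹ := by
      intro n hn
      simp only [ofDigitsTerm, blockDigits, hlog n hn, hj, ↓reduceIte, Fin.isValue,
        Fin.coe_ofNat_eq_mod, Nat.mod_succ, Nat.cast_ofNat, pow_succ]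
      ring
    rw [Finset.sum_congr rfl hterm,
      Finset.sum_Ico_sub (fun n => -((3 : ℝ) ^ n)⁻¹) (by rw [pow_succ]; omega)]
    ring
  · refine Finset.sum_eq_zero fun n hn => ?_
    simp [ofDigitsTerm, blockDigits, hlog n hn, hj]

lemma sum_range_ofDigitsTerm_blockDigits (i : ℕ) :
    ∑ n ∈ Finset.range (2 ^ (i + 4) - 1), ofDigitsTerm blockDigits n =
      (foldedMatrix i 0 1 : ℝ) / foldedMatrix i 1 1 -
        if Even i then ((3 : ℝ) ^ (2 ^ (i + 4) - 1))⁻¹ else 0 := by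
  have hstep (j : ℕ) : ∑ n ∈ Finset.range (2 ^ (j + 1) - 1), ofDigitsTerm blockDigits n =
      ∑ n ∈ Finset.range (2 ^ j - 1), ofDigitsTerm blockDigits n +
        ∑ n ∈ Finset.Ico (2 ^ j - 1) (2 ^ (j + 1) - 1), ofDigitsTerm blockDigits n :=
    (Finset.sum_range_add_sum_Ico _ (by rw [pow_succ]; omega)).symm
  induction i with
  | zero =>
    simp only [hstep, sum_ofDigitsTerm_blockDigits_Ico]
    norm_num [foldedMatrix]
  | succ i ih =>
    have hd : (foldedMatrix i 1 1 : ℝ) = 3 ^ (2 ^ (i + 3) - 1) := mod_cast foldedMatrix_one_one i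
    have hd0 : (foldedMatrix i 1 1 : ℝ) ≠ 0 := by rw [hd]; positivity
    rw [hstep, sum_ofDigitsTerm_blockDigits_Ico, ih, foldedMatrix_succ_zero_one,
      foldedMatrix_succ_one_one, pow_two_pow_succ_sub_one _ (i + 4),
      pow_two_pow_succ_sub_one _ (i + 3), ← hd]
    rcases Nat.even_or_odd i with hi | hi
    · have hodd : ¬Odd (i + 4) := by simpa [parity_simps] using hi
      have heven : ¬Even (i + 1) := by simpa [parity_simps] using hi
      rw [if_neg hodd, if_pos hi, if_neg heven, hi.neg_one_pow]
      push_cast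
      field_simp
      ring
    · have hodd : Odd (i + 4) := by simpa [parity_simps] using hi
      have heven : Even (i + 1) := by simpa [parity_simps] using hi
      rw [if_pos hodd, if_neg (Nat.not_even_iff_odd.mpr hi), if_pos heven, hi.neg_one_pow]
      push_cast
      field_simp
      ring

lemma abs_ofDigits_blockDigits_sub_le (i : ℕ) :
    |ofDigits blockDigits - (foldedMatrix i 0 1 : ℝ) / foldedMatrix i 1 1| ≤
      (3 * (foldedMatrix i 1 1 : ℝ) ^ 2)⁻¹ := by
  have hN : (3 : ℝ) ^ (2 ^ (i + 4) - 1) = 3 * (foldedMatrix i 1 1 : ℝ) ^ 2 := by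
    rw [pow_two_pow_succ_sub_one, foldedMatrix_one_one, mul_comm]
    push_cast
    rfl
  have htail := ofDigits_eq_sum_add_ofDigits blockDigits (2 ^ (i + 4) - 1)
  rw [sum_range_ofDigitsTerm_blockDigits, Nat.cast_ofNat, hN] at htail
  have h0 := ofDigits_nonneg fun n => blockDigits (n + (2 ^ (i + 4) - 1))
  have h1 := ofDigits_le_one fun n => blockDigits (n + (2 ^ (i + 4) - 1))
  have hpos : 0 < (3 * (foldedMatrix i 1 1 : ℝ) ^ 2)⁻¹ := by rw [← hN]; positivity
  rw [abs_le]
  have hlo := mul_nonneg hpos.le h0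
  have hhi := mul_le_mul_of_nonneg_left h1 hpos.le
  split_ifs at htail <;> constructor <;> linarith

lemma ofDigits_blockDigits_mem_cylinder (i : ℕ) :
    ofDigits blockDigits ∈ cylinder (3 :: innerWord i) := by
  apply mem_cylinder_of_between fun t ht => (forall_mem_cons_innerWord i t ht).1
  have hdet := det_foldedMatrix i
  rw [det_fin_two] at hdet
  obtain ⟨-, -, hC, hCD⟩ := foldedMatrix_bounds i
  rw [continuantMatrix_eq_append_mul _ 3, continuantMatrix_foldedWord]
  have := between_of_abs_sub_le (A := foldedMatrix i 0 0) (C := foldedMatrix i 1 0)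
    (mod_cast hdet) (mod_cast hC) (mod_cast hCD) (abs_ofDigits_blockDigits_sub_le i)
  simp only [mobius, mul_apply, of_apply, cons_val', cons_val_zero, cons_val_fin_one,
    Fin.sum_univ_two, mul_neg, cons_val_one, mul_one, Int.cast_add, Int.cast_neg, Int.cast_mul,
    Int.cast_ofNat, mul_zero, add_zero, zero_add]
  convert this using 3
  ring

theorem stmt7 : (Fset 9 ∩ ternaryCantor).Nonempty := by
  have hdigits : ∀ n, blockDigits n ≠ 1 := fun n => by unfold blockDigits; split_ifs <;> decide
  refine ⟨ofDigits blockDigits, ?_, ofDigits_mem_ternaryCantor hdigits⟩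
  refine mem_Fset_of_forall_mem_cylinder 9 (fun i => 3 :: innerWord i) ?_ ?_
    ofDigits_blockDigits_mem_cylinder
  · exact fun i t ht => (forall_mem_cons_innerWord i t ht).imp_right (le_trans · (by norm_num))
  · exact fun k => ⟨k, Nat.lt_succ_of_le (le_length_innerWord k)⟩
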